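/- arXiv:2004.04939 — 5 statements merged into one kernel-verified Lean document; each statement's English description precedes it below -/
import Mathlib

section
/- For every i ∈ I, the endomorphisms T_i and T_i' of K_t(A) are mutually inverse: T_i ∘ T_i' = id_{K_t(A)} and T_i' ∘ T_i = id_{K_t(A)}. In particular T_i is an F-algebra automorphism of K_t(A). -/
noncomputable section

/-- The base field `F = ℂ(s)`, rational functions over `ℂ` in one variable `s`. -/
abbrev F : Type := RatFunc ℂ

/-- `t^{1/2} := s`. -/
def tHalf : F := RatFunc.X

/-- `t := s^2`. -/
def tq : F := RatFunc.X ^ 2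

/-- `A = (a i j)` is the Cartan matrix of a finite-dimensional simply-laced simple Lie
algebra of type ADE: a symmetric positive-definite integer matrix with diagonal entries `2`
and off-diagonal entries in `{0, -1}`. -/
def IsCartanADE {I : Type} [Fintype I] (a : I → I → ℤ) : Prop :=
  (∀ i, a i i = 2) ∧ (∀ i j, a i j = a j i) ∧
    (∀ i j, i ≠ j → a i j = 0 ∨ a i j = -1) ∧
    Matrix.PosDef (Matrix.of fun i j : I => (a i j : ℝ))

variable {I : Type} [Fintype I] [DecidableEq I]

/-- The generator `y(i,m)` of the free algebra. -/
def X (i : I) (m : ℤ) : FreeAlgebra F (I × ℤ) := FreeAlgebra.ι F (i, m)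

/-- The defining relations (a), (b), (c) of the quantum Grothendieck ring `K_t(A)`:
(a) quantum Serre relations in each copy, (b) `t`-boson relations between adjacent
copies, (c) `t`-commutation relations between non-adjacent copies. -/
inductive KtRel (a : I → I → ℤ) :
    FreeAlgebra F (I × ℤ) → FreeAlgebra F (I × ℤ) → Prop
  | comm0 {i j : I} {m : ℤ} (h : a i j = 0) :
      KtRel a (X i m * X j m) (X j m * X i m)
  | serre {i j : I} {m : ℤ} (h : a i j = -1) :
      KtRel a (X i m ^ 2 * X j m + X j m * X i m ^ 2)
        ((tq + tq⁻¹) • (X i m * X j m * X i m))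
  | boson (i j : I) (m : ℤ) :
      KtRel a (X i m * X j (m + 1))
        ((tq ^ (a i j)) • (X j (m + 1) * X i m)
          + (if i = j then ((1 : F) - tq ^ 2) • (1 : FreeAlgebra F (I × ℤ)) else 0))
  | tcomm {i j : I} {m p : ℤ} (h : p > m + 1) :
      KtRel a (X i m * X j p)
        ((tq ^ ((((-1 : ℤˣ) ^ (p - m + 1) : ℤˣ) : ℤ) * a i j)) • (X j p * X i m))

/-- The quantum Grothendieck ring `K_t(A)`. -/
abbrev Kt (a : I → I → ℤ) := RingQuot (KtRel a)

/-- The generators `y(i,m)` of `K_t(A)`. -/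
def y (a : I → I → ℤ) (i : I) (m : ℤ) : Kt a :=
  RingQuot.mkAlgHom F (KtRel a) (X i m)

/-- `z(i; j, m) := (t^{1/2} y(j,m) y(i,m) − t^{−1/2} y(i,m) y(j,m)) / (t − t^{−1})`. -/
def z (a : I → I → ℤ) (i j : I) (m : ℤ) : Kt a :=
  (tq - tq⁻¹)⁻¹ • (tHalf • (y a j m * y a i m) - tHalf⁻¹ • (y a i m * y a j m))

/-- `T` satisfies the defining formulas of the braid-group generator `T_i` on `K_t(A)`:
`T(y(j,m)) = y(j, m + δ_{ij})` if `a i j ≠ -1`, and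
`T(y(j,m)) = (t^{1/2} y(j,m) y(i,m) − t^{−1/2} y(i,m) y(j,m)) / (t − t^{−1})`
if `a i j = -1`. -/
def TiFormula (a : I → I → ℤ) (i : I) (T : Kt a → Kt a) : Prop :=
  ∀ (j : I) (m : ℤ),
    T (y a j m) =
      if a i j = -1 then z a i j m else y a j (m + if i = j then 1 else 0)

/-- `T` satisfies the defining formulas of the inverse braid-group generator `T_i'`:
`T(y(j,m)) = y(j, m − δ_{ij})` if `a i j ≠ -1`, and
`T(y(j,m)) = (t^{1/2} y(i,m) y(j,m) − t^{−1/2} y(j,m) y(i,m)) / (t − t^{−1})`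
if `a i j = -1`. -/
def TiInvFormula (a : I → I → ℤ) (i : I) (T : Kt a → Kt a) : Prop :=
  ∀ (j : I) (m : ℤ),
    T (y a j m) =
      if a i j = -1 then
        (tq - tq⁻¹)⁻¹ • (tHalf • (y a i m * y a j m) - tHalf⁻¹ • (y a j m * y a i m))
      else y a j (m - if i = j then 1 else 0)

end

/-!
An algebra map out of `K_t(A)` is determined by the images of the `y(j,m)`, so it suffices to see
that both composites fix each generator. For `a(i,j) ≠ -1` the level shifts cancel. For
`a(i,j) = -1`, `y(j,m)` is recovered from a nested `t`-commutator with `y(i,m)` and `y(i,m ± 1)`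
thanks to the `t`-boson relations `y(i,m) y(i,m+1) = t² y(i,m+1) y(i,m) + 1 − t²` and
`y(j,m) y(i,m+1) = t⁻¹ y(i,m+1) y(j,m)`. The identity needed for `T_i' ∘ T_i` is the one for
`T_i ∘ T_i'` read in the opposite algebra.
-/

section QBracket

variable {K R : Type} [Field K] [Ring R] [Algebra K R] {s : K}

/-- The `t`-commutator `(t^{1/2} u v − t^{−1/2} v u) / (t − t^{−1})` with `t = s ^ 2`. -/
def qBracket (s : K) (u v : R) : R :=
  (s ^ 2 - (s ^ 2)⁻¹)⁻¹ • (s • (u * v) - s⁻¹ • (v * u))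

lemma map_qBracket {S : Type} [Ring S] [Algebra K S] (f : R →ₐ[K] S) (u v : R) :
    f (qBracket s u v) = qBracket s (f u) (f v) := by
  simp only [qBracket, map_smul, map_sub, map_mul]

lemma op_qBracket (u v : R) :
    MulOpposite.op (qBracket s u v) = qBracket s (MulOpposite.op v) (MulOpposite.op u) := by
  simp only [qBracket, MulOpposite.op_smul, MulOpposite.op_sub, MulOpposite.op_mul]

lemma sq_sub_inv_sq_ne_zero (hs : s ≠ 0) (hs4 : s ^ 4 ≠ 1) : s ^ 2 - (s ^ 2)⁻¹ ≠ 0 := by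
  rw [sub_ne_zero]
  intro h
  apply hs4
  field_simp at h
  linear_combination h

lemma qBracket_qBracket_of_boson (hs : s ≠ 0) (hs4 : s ^ 4 ≠ 1) {A B Y : R}
    (hAY : A * Y = (s ^ 2) ^ 2 • (Y * A) + (1 - (s ^ 2) ^ 2) • 1)
    (hBY : B * Y = (s ^ 2)⁻¹ • (Y * B)) :
    qBracket s Y (qBracket s B A) = B := by
  have hBAY : B * A * Y = s ^ 2 • (Y * (B * A)) + (1 - (s ^ 2) ^ 2) • B := by
    rw [mul_assoc, hAY, mul_add, mul_smul_comm, mul_smul_comm, mul_one, ← mul_assoc, hBY,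
      smul_mul_assoc, mul_assoc, smul_smul]
    match_scalars <;> field_simp
  have hABY : A * B * Y = s ^ 2 • (Y * (A * B)) + ((s ^ 2)⁻¹ - s ^ 2) • B := by
    rw [mul_assoc, hBY, mul_smul_comm, ← mul_assoc, hAY, add_mul, smul_mul_assoc,
      smul_mul_assoc, one_mul, mul_assoc, smul_add, smul_smul, smul_smul]
    match_scalars <;> field_simp
  have hq := sq_sub_inv_sq_ne_zero hs hs4
  simp only [qBracket, mul_sub, sub_mul, mul_smul_comm, smul_mul_assoc, smul_sub, smul_smul,
    hBAY, hABY, smul_add]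
  match_scalars <;> field_simp <;> ring

lemma qBracket_qBracket_of_boson' (hs : s ≠ 0) (hs4 : s ^ 4 ≠ 1) {A B Y : R}
    (hYA : Y * A = (s ^ 2) ^ 2 • (A * Y) + (1 - (s ^ 2) ^ 2) • 1)
    (hYB : Y * B = (s ^ 2)⁻¹ • (B * Y)) :
    qBracket s (qBracket s A B) Y = B := by
  apply MulOpposite.op_injective
  rw [op_qBracket, op_qBracket]
  apply qBracket_qBracket_of_boson hs hs4
  · simp only [← MulOpposite.op_mul, hYA, MulOpposite.op_add, MulOpposite.op_smul,
      MulOpposite.op_one]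
  · simp only [← MulOpposite.op_mul, hYB, MulOpposite.op_smul]

end QBracket

lemma tHalf_pow_four_ne_one : tHalf ^ 4 ≠ 1 := by
  intro h
  have hX : (Polynomial.X : Polynomial ℂ) ^ 4 = 1 := by
    apply RatFunc.algebraMap_injective ℂ
    simpa [RatFunc.algebraMap_X, tHalf] using h
  simpa using congrArg Polynomial.natDegree hX

lemma ne_of_apply_eq_neg_one {I : Type} {a : I → I → ℤ} {i j : I} (hii : a i i = 2)
    (hij : a i j = -1) : i ≠ j := by
  rintro rfl
  rw [hii] at hij
  norm_num at hij

namespace Kt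

variable {I : Type} [DecidableEq I] {a : I → I → ℤ}

lemma algHom_ext {B : Type} [Semiring B] [Algebra F B] {f g : Kt a →ₐ[F] B}
    (h : ∀ j m, f (y a j m) = g (y a j m)) : f = g :=
  RingQuot.ringQuot_ext' _ _ _ <| FreeAlgebra.hom_ext <| funext fun ⟨j, m⟩ => h j m

lemma z_eq_qBracket (i j : I) (m : ℤ) : z a i j m = qBracket tHalf (y a j m) (y a i m) := rfl

lemma y_mul_y_add_one (i j : I) (m : ℤ) :
    y a i m * y a j (m + 1) =
      tq ^ a i j • (y a j (m + 1) * y a i m) + if i = j then (1 - tq ^ 2) • 1 else 0 := by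
  have h := RingQuot.mkAlgHom_rel F (KtRel.boson (a := a) i j m)
  simpa only [map_mul, map_add, map_smul, apply_ite (RingQuot.mkAlgHom F (KtRel a)),
    map_one, map_zero, y] using h

lemma y_mul_y_add_one_self {i : I} (hii : a i i = 2) (m : ℤ) :
    y a i m * y a i (m + 1) =
      (tHalf ^ 2) ^ 2 • (y a i (m + 1) * y a i m) + (1 - (tHalf ^ 2) ^ 2) • 1 := by
  rw [y_mul_y_add_one, hii, if_pos rfl]
  rfl

lemma y_mul_y_add_one_of_eq_neg_one {i j : I} (hij : a i j = -1) (hne : i ≠ j) (m : ℤ) :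
    y a i m * y a j (m + 1) = (tHalf ^ 2)⁻¹ • (y a j (m + 1) * y a i m) := by
  rw [y_mul_y_add_one, hij, if_neg hne, add_zero, zpow_neg_one]
  rfl

variable {i : I} {T T' : Kt a →ₐ[F] Kt a}

lemma ti_comp_tiInv_eq_id (hii : a i i = 2) (hsymm : ∀ j k, a j k = a k j)
    (hT : TiFormula a i T) (hT' : TiInvFormula a i T') : T.comp T' = AlgHom.id F (Kt a) := by
  refine algHom_ext fun j m => ?_
  rw [AlgHom.comp_apply, AlgHom.id_apply, hT' j m]
  by_cases hij : a i j = -1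
  · rw [if_pos hij]
    have hne := ne_of_apply_eq_neg_one hii hij
    have hi : a i i ≠ -1 := by rw [hii]; norm_num
    change T (qBracket tHalf (y a i m) (y a j m)) = y a j m
    rw [map_qBracket, hT i m, hT j m, if_neg hi, if_pos rfl, if_pos hij,
      z_eq_qBracket]
    exact qBracket_qBracket_of_boson RatFunc.X_ne_zero tHalf_pow_four_ne_one
      (y_mul_y_add_one_self hii m) (y_mul_y_add_one_of_eq_neg_one (hsymm j i ▸ hij) hne.symm m)
  · rw [if_neg hij, hT, if_neg hij, sub_add_cancel]

lemma tiInv_comp_ti_eq_id (hii : a i i = 2)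
    (hT : TiFormula a i T) (hT' : TiInvFormula a i T') : T'.comp T = AlgHom.id F (Kt a) := by
  refine algHom_ext fun j m => ?_
  rw [AlgHom.comp_apply, AlgHom.id_apply, hT j m]
  by_cases hij : a i j = -1
  · rw [if_pos hij]
    have hne := ne_of_apply_eq_neg_one hii hij
    have hi : a i i ≠ -1 := by rw [hii]; norm_num
    have hm : m - 1 + 1 = m := sub_add_cancel m 1
    rw [z_eq_qBracket, map_qBracket, hT' i m, hT' j m, if_neg hi, if_pos rfl,
      if_pos hij]
    refine qBracket_qBracket_of_boson' RatFunc.X_ne_zero tHalf_pow_four_ne_one ?_ ?_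
    · simpa only [hm] using y_mul_y_add_one_self hii (m - 1)
    · simpa only [hm] using y_mul_y_add_one_of_eq_neg_one hij hne (m - 1)
  · rw [if_neg hij, hT', if_neg hij, add_sub_cancel_right]

end Kt

/-- `T_i` and `T_i'` are mutually inverse; in particular `T_i` is an
`F`-algebra automorphism of `K_t(A)`. -/
theorem statement2 {I : Type} [Fintype I] [DecidableEq I] (a : I → I → ℤ)
    (hA : IsCartanADE a) (i : I) (T T' : Kt a →ₐ[F] Kt a)
    (hT : TiFormula a i ⇑T) (hT' : TiInvFormula a i ⇑T') :
    T.comp T' = AlgHom.id F (Kt a) ∧ T'.comp T = AlgHom.id F (Kt a) ∧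
      Function.Bijective ⇑T := by
  obtain ⟨hdiag, hsymm, -, -⟩ := hA
  have hTT' := Kt.ti_comp_tiInv_eq_id (hdiag i) hsymm hT hT'
  have hT'T := Kt.tiInv_comp_ti_eq_id (hdiag i) hT hT'
  exact ⟨hTT', hT'T, (AlgEquiv.ofAlgHom T T' hTT' hT'T).bijective⟩
end

section
/- For all i, j ∈ I with a(i,j) = 0 and i ≠ j, the endomorphisms T_i and T_j of K_t(A) commute: T_i ∘ T_j = T_j ∘ T_i. -/
noncomputable section

variable {I : Type} [Fintype I] [DecidableEq I]

set_option maxHeartbeats 1000000 in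
/-- if `a i j = 0` and `i ≠ j`, then `T_i` and `T_j` commute. -/
theorem statement3 {I : Type} [Fintype I] [DecidableEq I] (a : I → I → ℤ)
    (hA : IsCartanADE a) (i j : I) (hne : i ≠ j) (hij : a i j = 0)
    (Ti Tj : Kt a →ₐ[F] Kt a) (hTi : TiFormula a i ⇑Ti) (hTj : TiFormula a j ⇑Tj) :
    Ti.comp Tj = Tj.comp Ti := by
  have hji : a j i = 0 := by rw [hA.2.1 j i]; exact hij
  have hii : a i i = 2 := hA.1 i
  have hjj : a j j = 2 := hA.1 j
  have hTij : ∀ m, Ti (y a j m) = y a j m := fun m => by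
    simp [hTi j m, hij, hne]
  have hTji : ∀ m, Tj (y a i m) = y a i m := fun m => by
    simp [hTj i m, hji, hne.symm]
  have hc : y a i 0 = y a i 0 := rfl
  apply RingQuot.ringQuot_ext'
  apply FreeAlgebra.hom_ext
  funext km
  obtain ⟨k, m⟩ := km
  have hyk : (RingQuot.mkAlgHom F (KtRel a)) (FreeAlgebra.ι F (k, m)) = y a k m := rfl
  simp only [Function.comp_apply, AlgHom.coe_comp, hyk]
  by_cases hik : a i k = -1 <;> by_cases hjk : a j k = -1
  · -- both adjacent
    have hki : k ≠ i := fun h => by subst h; rw [hii] at hik; exact absurd hik (by decide)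
    have hkj : k ≠ j := fun h => by subst h; rw [hij] at hik; exact absurd hik (by decide)
    have h1 : ∀ m, Tj (y a k m) = z a j k m := fun m => by simp [hTj k m, hjk]
    have h2 : ∀ m, Ti (y a k m) = z a i k m := fun m => by simp [hTi k m, hik]
    have hcm : y a i m * y a j m = y a j m * y a i m := by
      have := RingQuot.mkAlgHom_rel F (KtRel.comm0 (a := a) (m := m) hij)
      simpa only [map_mul, y] using this
    have hcm' : ∀ x : Kt a, y a i m * (y a j m * x) = y a j m * (y a i m * x) := fun x => by
      rw [← mul_assoc, hcm, mul_assoc]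
    simp only [h1, h2, z, map_smul, map_sub, map_mul, hTij, hTji]
    simp only [smul_sub, smul_smul, mul_sub, sub_mul, smul_mul_assoc, mul_smul_comm,
      mul_assoc, hcm, hcm']
    rw [sub_sub, sub_sub]
    congr 1
    rw [← add_sub_assoc, ← add_sub_assoc, add_comm]
    have hco : (tq - tq⁻¹)⁻¹ * (tHalf⁻¹ * ((tq - tq⁻¹)⁻¹ * tHalf))
        = (tq - tq⁻¹)⁻¹ * (tHalf * ((tq - tq⁻¹)⁻¹ * tHalf⁻¹)) := by ring
    rw [hco]
  · -- a i k = -1, a j k ≠ -1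
    have hkj : k ≠ j := fun h => by subst h; rw [hij] at hik; exact absurd hik (by decide)
    have h1 : ∀ m, Tj (y a k m) = y a k m := fun m => by
      simp [hTj k m, hjk, Ne.symm hkj]
    have h2 : ∀ m, Ti (y a k m) = z a i k m := fun m => by simp [hTi k m, hik]
    simp only [h1, h2, z, map_smul, map_sub, map_mul, hTji]
  · -- a j k = -1, a i k ≠ -1
    have hki : k ≠ i := fun h => by subst h; rw [hji] at hjk; exact absurd hjk (by decide)
    have h1 : ∀ m, Ti (y a k m) = y a k m := fun m => by
      simp [hTi k m, hik, Ne.symm hki]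
    have h2 : ∀ m, Tj (y a k m) = z a j k m := fun m => by simp [hTj k m, hjk]
    simp only [h1, h2, z, map_smul, map_sub, map_mul, hTij]
  · -- neither adjacent
    have h1 : ∀ m, Ti (y a k m) = y a k (m + if i = k then 1 else 0) := fun m => by
      simp [hTi k m, hik]
    have h2 : ∀ m, Tj (y a k m) = y a k (m + if j = k then 1 else 0) := fun m => by
      simp [hTj k m, hjk]
    simp only [h1, h2]
    rw [add_right_comm]
end
end

section
/- There exists a family (K_β)_{β ∈ ℤ^{⊕I}} of F-linear subspaces of K_t(A) such that K_t(A) is the internal direct sum of the K_β, 1 ∈ K_0, K_β · K_γ ⊆ K_{β+γ} for all β, γ, and y(i,m) ∈ K_{(−1)^m e_i} for all i ∈ I and m ∈ ℤ (where e_i denotes the i-th standard basis element of ℤ^{⊕I}). Moreover this grading is compatible with the braid group action via simple reflections: for every i ∈ I and β ∈ ℤ^{⊕I}, T_i(K_β) ⊆ K_{s_i(β)}, where s_i(β) := β − (Σ_{j∈I} a(i,j) β_j) e_i is the simple reflection on the root lattice. -/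
noncomputable section

variable {I : Type} [Fintype I] [DecidableEq I]

/-!
Every defining relation of `K_t(A)` is homogeneous for the degree `y(i,m) ↦ (-1)^m e_i`, so
`y(i,m) ↦ y(i,m) ⊗ e^{(-1)^m e_i}` extends to an algebra map `Δ : K_t(A) → K_t(A)[ℤ^I]`, and
`K_β := {x | Δ x = x ⊗ e^β}`. These subspaces are independent (read off the coefficient of
`e^β`) and span, since they contain the generators and are closed under products.
For the braid action, `Δ ∘ T_i` and `(T_i ⊗ s_i) ∘ Δ` are algebra maps that agree on the
generators, because each `T_i(y(j,m))` is homogeneous of degree `s_i((-1)^m e_j)`; evaluating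
the resulting identity on `K_β` gives `T_i(K_β) ⊆ K_{s_i β}`.
-/

open AddMonoidAlgebra

namespace AlgHom

section Semiring

variable {k R G : Type*} [CommSemiring k] [Semiring R] [Algebra k R] [AddMonoid G]

def degreeSubmodule (Δ : R →ₐ[k] R[G]) (g : G) : Submodule k R where
  carrier := {x | Δ x = single g x}
  add_mem' {x y} hx hy := by simp_all [single_add]
  zero_mem' := by simp
  smul_mem' c x hx := by simp_all [smul_single]

variable {Δ : R →ₐ[k] R[G]}

theorem mem_degreeSubmodule {g : G} {x : R} : x ∈ Δ.degreeSubmodule g ↔ Δ x = single g x :=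
  Iff.rfl

theorem one_mem_degreeSubmodule : (1 : R) ∈ Δ.degreeSubmodule 0 := by
  simp [mem_degreeSubmodule, one_def]

theorem mul_mem_degreeSubmodule {g h : G} {x y : R} (hx : x ∈ Δ.degreeSubmodule g)
    (hy : y ∈ Δ.degreeSubmodule h) : x * y ∈ Δ.degreeSubmodule (g + h) := by
  rw [mem_degreeSubmodule] at *
  rw [map_mul, hx, hy, single_mul_single]

theorem iSupIndep_degreeSubmodule : iSupIndep Δ.degreeSubmodule := by
  intro g
  let coeffAt : R →ₗ[k] R :=
    Finsupp.lapply g ∘ₗ (coeffLinearEquiv k).toLinearMap ∘ₗ Δ.toLinearMap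
  have hg : ∀ x ∈ Δ.degreeSubmodule g, coeffAt x = x := fun x hx => by
    simp [coeffAt, mem_degreeSubmodule.1 hx, coeffLinearEquiv]
  have hne : (⨆ (h) (_ : h ≠ g), Δ.degreeSubmodule h) ≤ LinearMap.ker coeffAt :=
    iSup₂_le fun h hh x hx => by
      simp [coeffAt, mem_degreeSubmodule.1 hx, coeffLinearEquiv, Finsupp.single_eq_of_ne' hh]
  exact Submodule.disjoint_def.2 fun x hx hx' => (hg x hx).symm.trans (hne hx')

theorem iSup_degreeSubmodule_eq_top {s : Set R} (hs : Algebra.adjoin k s = ⊤)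
    (hhom : ∀ x ∈ s, ∃ g, x ∈ Δ.degreeSubmodule g) : ⨆ g, Δ.degreeSubmodule g = ⊤ := by
  let S : Subalgebra k R := Submodule.toSubalgebra (⨆ g, Δ.degreeSubmodule g)
    (Submodule.mem_iSup_of_mem 0 one_mem_degreeSubmodule) fun x y hx hy => by
      induction hx using Submodule.iSup_induction' with
      | mem g x hx =>
        induction hy using Submodule.iSup_induction' with
        | mem h y hy => exact Submodule.mem_iSup_of_mem _ (mul_mem_degreeSubmodule hx hy)
        | zero => simp
        | add y z _ _ hy hz => rw [mul_add]; exact add_mem hy hz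
      | zero => simp
      | add x z _ _ hx hz => rw [add_mul]; exact add_mem hx hz
  have hS : Algebra.adjoin k s ≤ S := Algebra.adjoin_le fun x hx => by
    obtain ⟨g, hg⟩ := hhom x hx
    exact Submodule.mem_iSup_of_mem g hg
  rw [hs, top_le_iff] at hS
  exact eq_top_iff.2 fun x _ => (hS ▸ Algebra.mem_top : x ∈ S)

theorem map_mem_degreeSubmodule {s : Set R} (hs : Algebra.adjoin k s = ⊤) (T : R →ₐ[k] R)
    (σ : G →+ G) (hgen : ∀ x ∈ s, ∃ g, x ∈ Δ.degreeSubmodule g ∧ T x ∈ Δ.degreeSubmodule (σ g))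
    {g : G} {x : R} (hx : x ∈ Δ.degreeSubmodule g) : T x ∈ Δ.degreeSubmodule (σ g) := by
  have hcomm : Δ.comp T = (mapAlgHom G T).comp ((mapDomainAlgHom k R σ).comp Δ) :=
    AlgHom.ext_of_adjoin_eq_top hs fun y hy => by
      obtain ⟨h, hy, hTy⟩ := hgen y hy
      simp [mem_degreeSubmodule.1 hy, mem_degreeSubmodule.1 hTy, mapDomain_single]
  rw [mem_degreeSubmodule]
  simpa [mem_degreeSubmodule.1 hx, mapDomain_single] using congr($hcomm x)

end Semiring

theorem isInternal_degreeSubmodule {k R G : Type*} [CommRing k] [Ring R] [Algebra k R]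
    [AddMonoid G] [DecidableEq G] {Δ : R →ₐ[k] R[G]} {s : Set R} (hs : Algebra.adjoin k s = ⊤)
    (hhom : ∀ x ∈ s, ∃ g, x ∈ Δ.degreeSubmodule g) : DirectSum.IsInternal Δ.degreeSubmodule :=
  DirectSum.isInternal_submodule_of_iSupIndep_of_iSup_eq_top iSupIndep_degreeSubmodule
    (iSup_degreeSubmodule_eq_top hs hhom)

end AlgHom

namespace Kt

open AlgHom

variable (a : I → I → ℤ)

section Grading

omit [Fintype I]

def yDegree (i : I) (m : ℤ) : I → ℤ := Pi.single i (((-1 : ℤˣ) ^ m : ℤˣ) : ℤ)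

theorem yDegree_add_yDegree_add_one (i : I) (m : ℤ) : yDegree i m + yDegree i (m + 1) = 0 := by
  simp [yDegree, ← Pi.single_add, zpow_add_one]

def freeGradingHom : FreeAlgebra F (I × ℤ) →ₐ[F] (FreeAlgebra F (I × ℤ))[I → ℤ] :=
  FreeAlgebra.lift F fun p => single (yDegree p.1 p.2) (X p.1 p.2)

theorem X_mem_degreeSubmodule (i : I) (m : ℤ) :
    X i m ∈ freeGradingHom.degreeSubmodule (yDegree i m) := by
  simp [mem_degreeSubmodule, freeGradingHom, X]

theorem KtRel.exists_degree {u v : FreeAlgebra F (I × ℤ)} (r : KtRel a u v) :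
    ∃ d, u ∈ freeGradingHom.degreeSubmodule d ∧ v ∈ freeGradingHom.degreeSubmodule d := by
  cases r with
  | @comm0 i j m _ =>
    have hi := X_mem_degreeSubmodule i m
    have hj := X_mem_degreeSubmodule j m
    exact ⟨_, mul_mem_degreeSubmodule hi hj,
      add_comm (yDegree i m) _ ▸ mul_mem_degreeSubmodule hj hi⟩
  | @serre i j m _ =>
    have hi := X_mem_degreeSubmodule i m
    have hj := X_mem_degreeSubmodule j m
    refine ⟨yDegree i m + yDegree j m + yDegree i m, add_mem ?_ ?_,
      Submodule.smul_mem _ _ (mul_mem_degreeSubmodule (mul_mem_degreeSubmodule hi hj) hi)⟩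
    · rw [pow_two]
      convert mul_mem_degreeSubmodule (mul_mem_degreeSubmodule hi hi) hj using 2
      abel
    · rw [pow_two]
      convert mul_mem_degreeSubmodule hj (mul_mem_degreeSubmodule hi hi) using 2
      abel
  | boson i j m =>
    have hi := X_mem_degreeSubmodule i m
    have hj := X_mem_degreeSubmodule j (m + 1)
    refine ⟨_, mul_mem_degreeSubmodule hi hj, add_mem
      (Submodule.smul_mem _ _ (add_comm (yDegree j (m + 1)) _ ▸ mul_mem_degreeSubmodule hj hi)) ?_⟩
    split_ifs with h
    · subst h
      rw [yDegree_add_yDegree_add_one]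
      exact Submodule.smul_mem _ _ one_mem_degreeSubmodule
    · exact zero_mem _
  | @tcomm i j m p _ =>
    have hi := X_mem_degreeSubmodule i m
    have hj := X_mem_degreeSubmodule j p
    exact ⟨_, mul_mem_degreeSubmodule hi hj,
      Submodule.smul_mem _ _ (add_comm (yDegree i m) _ ▸ mul_mem_degreeSubmodule hj hi)⟩

def gradingHom : Kt a →ₐ[F] (Kt a)[I → ℤ] :=
  RingQuot.liftAlgHom F ⟨(mapAlgHom _ (RingQuot.mkAlgHom F (KtRel a))).comp freeGradingHom,
    fun _ _ r => by
      obtain ⟨d, hu, hv⟩ := KtRel.exists_degree a r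
      simp only [AlgHom.comp_apply, mem_degreeSubmodule.1 hu, mem_degreeSubmodule.1 hv,
        mapAlgHom_single, RingQuot.mkAlgHom_rel F r]⟩

theorem y_mem_degreeSubmodule (i : I) (m : ℤ) :
    y a i m ∈ (gradingHom a).degreeSubmodule (yDegree i m) := by
  simp [mem_degreeSubmodule, gradingHom, y, freeGradingHom, X]

theorem z_mem_degreeSubmodule (i j : I) (m : ℤ) :
    z a i j m ∈ (gradingHom a).degreeSubmodule (yDegree j m + yDegree i m) := by
  have hi := y_mem_degreeSubmodule a i m
  have hj := y_mem_degreeSubmodule a j m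
  refine Submodule.smul_mem _ _ (sub_mem (Submodule.smul_mem _ _ ?_) (Submodule.smul_mem _ _ ?_))
  · exact mul_mem_degreeSubmodule hj hi
  · exact add_comm (yDegree i m) _ ▸ mul_mem_degreeSubmodule hi hj

theorem adjoin_range_y : Algebra.adjoin F (Set.range fun p : I × ℤ => y a p.1 p.2) = ⊤ := by
  have : (Set.range fun p : I × ℤ => y a p.1 p.2) =
      RingQuot.mkAlgHom F (KtRel a) '' Set.range (FreeAlgebra.ι F) := by
    rw [← Set.range_comp]; rfl
  rw [this, Algebra.adjoin_image, FreeAlgebra.adjoin_range_ι, Algebra.map_top,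
    AlgHom.range_eq_top]
  exact RingQuot.mkAlgHom_surjective F (KtRel a)

end Grading

def simpleReflection (i : I) : (I → ℤ) →+ (I → ℤ) where
  toFun β := β - Pi.single i (∑ j, a i j * β j)
  map_zero' := by simp
  map_add' β γ := by
    simp only [Pi.add_apply, mul_add, Finset.sum_add_distrib, Pi.single_add]
    abel

theorem simpleReflection_single (i j : I) (c : ℤ) :
    simpleReflection a i (Pi.single j c) = Pi.single j c - Pi.single i (a i j * c) := by
  simp [simpleReflection, Pi.single_apply]

theorem map_y_mem_degreeSubmodule (hA : IsCartanADE a) {i : I} {T : Kt a →ₐ[F] Kt a}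
    (hT : TiFormula a i T) (j : I) (m : ℤ) :
    T (y a j m) ∈ (gradingHom a).degreeSubmodule (simpleReflection a i (yDegree j m)) := by
  rw [hT, yDegree, simpleReflection_single]
  split_ifs with hij hij'
  · convert z_mem_degreeSubmodule a i j m using 2
    simp [hij, yDegree, Pi.single_neg]
  · subst hij'
    convert y_mem_degreeSubmodule a i (m + 1) using 2
    simp [hA.1 i, yDegree, zpow_add_one, ← Pi.single_sub]
    ring
  · have h0 : a i j = 0 := (hA.2.2.1 i j hij').resolve_right hij
    simpa [h0, yDegree] using y_mem_degreeSubmodule a j m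

end Kt

/-- `K_t(A)` is graded by the root lattice `ℤ^{⊕I}`, with `1` in degree `0`,
multiplication adding degrees, `y(i,m)` of degree `(−1)^m e_i`, and the grading is
compatible with the braid group action: `T_i(K_β) ⊆ K_{s_i(β)}` where
`s_i(β) = β − (Σ_j a i j β_j) e_i`. -/
theorem statement8 {I : Type} [Fintype I] [DecidableEq I] (a : I → I → ℤ)
    (hA : IsCartanADE a) (T : I → (Kt a →ₐ[F] Kt a))
    (hT : ∀ i, TiFormula a i ⇑(T i)) :
    ∃ K : (I → ℤ) → Submodule F (Kt a),
      DirectSum.IsInternal K ∧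
      (1 : Kt a) ∈ K 0 ∧
      (∀ β γ : I → ℤ, ∀ u ∈ K β, ∀ v ∈ K γ, u * v ∈ K (β + γ)) ∧
      (∀ (i : I) (m : ℤ),
        y a i m ∈ K (Pi.single i ((((-1 : ℤˣ) ^ m : ℤˣ) : ℤ)))) ∧
      (∀ (i : I) (β : I → ℤ), ∀ u ∈ K β,
        T i u ∈ K (β - Pi.single i (∑ j : I, a i j * β j))) := by
  have hspan := Kt.adjoin_range_y a
  refine ⟨(Kt.gradingHom a).degreeSubmodule, AlgHom.isInternal_degreeSubmodule hspan ?_,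
    AlgHom.one_mem_degreeSubmodule, fun _ _ _ hu _ hv => AlgHom.mul_mem_degreeSubmodule hu hv,
    Kt.y_mem_degreeSubmodule a,
    fun i _ _ hu => AlgHom.map_mem_degreeSubmodule hspan (T i) (Kt.simpleReflection a i) ?_ hu⟩
  · rintro _ ⟨⟨j, m⟩, rfl⟩
    exact ⟨_, Kt.y_mem_degreeSubmodule a j m⟩
  · rintro _ ⟨⟨j, m⟩, rfl⟩
    exact ⟨_, Kt.y_mem_degreeSubmodule a j m, Kt.map_y_mem_degreeSubmodule a hA (hT i) j m⟩
end
end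

section
/- Let i, j ∈ I with a(i,j) = −1 and m ∈ ℤ. Then in K_t(A) the elements y(i,m+1) and z(i; j,m) satisfy the quantum Serre relation: y(i,m+1)^2 z(i; j,m) − (t + t^{−1}) y(i,m+1) z(i; j,m) y(i,m+1) + z(i; j,m) y(i,m+1)^2 = 0. -/
noncomputable section

variable {I : Type} [Fintype I] [DecidableEq I]

lemma tHalf_ne_zero : tHalf ≠ 0 := RatFunc.X_ne_zero

lemma tq_ne_zero : tq ≠ 0 := pow_ne_zero _ RatFunc.X_ne_zero

lemma tq_eq_tHalf_sq : tq = tHalf ^ 2 := rfl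

lemma tq_sub_inv_ne_zero : tq - tq⁻¹ ≠ 0 := by
  have h4 : (RatFunc.X : RatFunc ℂ) ^ 4 ≠ 1 := by
    intro h
    have h2 : (algebraMap (Polynomial ℂ) (RatFunc ℂ)) (Polynomial.X ^ 4) =
        (algebraMap (Polynomial ℂ) (RatFunc ℂ)) 1 := by
      simpa [map_pow, RatFunc.algebraMap_X] using h
    have h3 := IsFractionRing.injective (Polynomial ℂ) (RatFunc ℂ) h2
    simpa using congrArg Polynomial.natDegree h3
  intro h
  apply h4
  have hmul := congrArg (· * tq) (sub_eq_zero.mp h)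
  simp only [inv_mul_cancel₀ tq_ne_zero] at hmul
  rw [← hmul]; unfold tq; ring

lemma y_boson {I : Type} [Fintype I] [DecidableEq I] (a : I → I → ℤ) (i j : I) (m : ℤ) :
    y a i m * y a j (m + 1) =
      (tq ^ (a i j)) • (y a j (m + 1) * y a i m)
        + (if i = j then ((1 : F) - tq ^ 2) • (1 : Kt a) else 0) := by
  have h := RingQuot.mkAlgHom_rel F (KtRel.boson (a := a) i j m)
  simp only [map_mul, map_add, map_smul, apply_ite (RingQuot.mkAlgHom F (KtRel a)),
    map_one, map_zero] at h
  simpa [y] using h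


lemma serre_aux {K : Type} [Field K] {M : Type} [Ring M] [Algebra K M]
    (Y u v : M) (t s : K) (hs : s ≠ 0) (hts : t = s ^ 2) (hd : t - t⁻¹ ≠ 0)
    (hu : u * Y = t ^ 2 • (Y * u) + (1 - t ^ 2) • (1 : M))
    (hv : v * Y = t⁻¹ • (Y * v)) :
    Y ^ 2 * ((t - t⁻¹)⁻¹ • (s • (v * u) - s⁻¹ • (u * v)))
      - (t + t⁻¹) • (Y * ((t - t⁻¹)⁻¹ • (s • (v * u) - s⁻¹ • (u * v))) * Y)
      + ((t - t⁻¹)⁻¹ • (s • (v * u) - s⁻¹ • (u * v))) * Y ^ 2 = 0 := by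
  have ht : t ≠ 0 := by rw [hts]; exact pow_ne_zero _ hs
  have hd' : s ^ 2 - (s ^ 2)⁻¹ ≠ 0 := hts ▸ hd
  set zz := (t - t⁻¹)⁻¹ • (s • (v * u) - s⁻¹ • (u * v)) with hzz
  have hv' : ∀ w, v * (Y * w) = t⁻¹ • (Y * (v * w)) := fun w => by
    rw [← mul_assoc, hv, smul_mul_assoc, mul_assoc]
  have hu' : ∀ w, u * (Y * w) = t ^ 2 • (Y * (u * w)) + (1 - t ^ 2) • w := fun w => by
    rw [← mul_assoc, hu, add_mul, smul_mul_assoc, smul_mul_assoc, one_mul, mul_assoc]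
  have hcd : (t - t⁻¹)⁻¹ * (2 * s - s⁻¹ ^ 3 - s ^ 5) = s⁻¹ - s ^ 3 := by
    rw [hts, inv_mul_eq_div, div_eq_iff hd']
    field_simp
    ring
  have hwY : (s • (v * u) - s⁻¹ • (u * v)) * Y
      = t • (Y * (s • (v * u) - s⁻¹ • (u * v))) + (2 * s - s⁻¹ ^ 3 - s ^ 5) • v := by
    simp only [smul_mul_assoc, sub_mul, mul_assoc, hu, hv, mul_add, mul_sub,
      mul_smul_comm, smul_add, smul_sub, smul_smul, hu', hv', mul_one]
    match_scalars <;> (simp only [hts]; try field_simp; try ring)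
  have hzY : zz * Y = t • (Y * zz) + (s⁻¹ - s ^ 3) • v := by
    rw [hzz, smul_mul_assoc, hwY, smul_add, mul_smul_comm, smul_smul, smul_smul,
      mul_comm ((t - t⁻¹)⁻¹) t, hcd, smul_smul]
  have hzY' : ∀ w, zz * (Y * w) = t • (Y * (zz * w)) + (s⁻¹ - s ^ 3) • (v * w) := fun w => by
    rw [← mul_assoc, hzY, add_mul, smul_mul_assoc, smul_mul_assoc, mul_assoc]
  simp only [pow_two, mul_assoc, hzY', hzY, hv, mul_add, add_mul, mul_smul_comm,
    smul_mul_assoc, smul_add, smul_sub, smul_smul]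
  match_scalars <;> (simp only [hts]; try field_simp; try ring)

/-- for `a i j = -1`, `y(i,m+1)` and `z(i;j,m)` satisfy the quantum Serre
relation `y(i,m+1)² z − (t+t⁻¹) y(i,m+1) z y(i,m+1) + z y(i,m+1)² = 0`. -/
theorem statement9 {I : Type} [Fintype I] [DecidableEq I] (a : I → I → ℤ)
    (hA : IsCartanADE a) (i j : I) (hij : a i j = -1) (m : ℤ) :
    y a i (m + 1) ^ 2 * z a i j m
      - (tq + tq⁻¹) • (y a i (m + 1) * z a i j m * y a i (m + 1))
      + z a i j m * y a i (m + 1) ^ 2 = 0 := by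
  obtain ⟨hdiag, hsymm, -, -⟩ := hA
  have hji : a j i = -1 := (hsymm j i).trans hij
  have hne : i ≠ j := by
    intro h; subst h
    rw [hdiag] at hij
    omega
  have hu : y a i m * y a i (m + 1)
      = (tq ^ 2) • (y a i (m + 1) * y a i m) + ((1 : F) - tq ^ 2) • (1 : Kt a) := by
    have h := y_boson a i i m
    rw [hdiag i, if_pos rfl] at h
    rw [show ((2 : ℤ)) = ((2 : ℕ) : ℤ) from rfl, zpow_natCast] at h
    exact h
  have hv : y a j m * y a i (m + 1) = tq⁻¹ • (y a i (m + 1) * y a j m) := by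
    have h := y_boson a j i m
    rw [hji, if_neg (Ne.symm hne), add_zero, zpow_neg_one] at h
    exact h
  simp only [z]
  exact serre_aux (y a i (m + 1)) (y a i m) (y a j m) tq tHalf tHalf_ne_zero
    tq_eq_tHalf_sq tq_sub_inv_ne_zero hu hv
end
end

section
/- Let i, j ∈ I with a(i,j) = −1 and m ∈ ℤ. Then in K_t(A): z(i; j,m)^2 y(i,m+1) − (t + t^{−1}) z(i; j,m) y(i,m+1) z(i; j,m) + y(i,m+1) z(i; j,m)^2 = 0. -/
noncomputable section

variable {I : Type} [Fintype I] [DecidableEq I]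

set_option maxHeartbeats 2000000 in
lemma key_serre_aux {K : Type} [Field K] {R : Type} [Ring R] [Algebra K R] (s : K) (hs : s ≠ 0)
    (Yi Yj W : R)
    (hS : Yj ^ 2 * Yi + Yi * Yj ^ 2 = (s ^ 2 + (s ^ 2)⁻¹) • (Yj * Yi * Yj))
    (hB1 : Yi * W = (s ^ 2) ^ 2 • (W * Yi) + ((1:K) - (s ^ 2) ^ 2) • (1 : R))
    (hB2 : Yj * W = (s ^ 2)⁻¹ • (W * Yj)) :
    ((s ^ 2 - (s ^ 2)⁻¹)⁻¹ • (s • (Yj * Yi) - s⁻¹ • (Yi * Yj))) ^ 2 * W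
      - (s ^ 2 + (s ^ 2)⁻¹) • (((s ^ 2 - (s ^ 2)⁻¹)⁻¹ • (s • (Yj * Yi) - s⁻¹ • (Yi * Yj))) * W *
          ((s ^ 2 - (s ^ 2)⁻¹)⁻¹ • (s • (Yj * Yi) - s⁻¹ • (Yi * Yj))))
      + W * ((s ^ 2 - (s ^ 2)⁻¹)⁻¹ • (s • (Yj * Yi) - s⁻¹ • (Yi * Yj))) ^ 2 = 0 := by
  have hB1' : ∀ x : R, Yi * (W * x) = (s ^ 2) ^ 2 • (W * (Yi * x)) + ((1:K) - (s ^ 2) ^ 2) • x := by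
    intro x
    rw [← mul_assoc, hB1]
    simp [add_mul, smul_mul_assoc, mul_assoc]
  have hB2' : ∀ x : R, Yj * (W * x) = (s ^ 2)⁻¹ • (W * (Yj * x)) := by
    intro x
    rw [← mul_assoc, hB2, smul_mul_assoc, mul_assoc]
  have hS' : Yj * (Yj * Yi) + Yi * (Yj * Yj) = (s ^ 2 + (s ^ 2)⁻¹) • (Yj * (Yi * Yj)) := by
    simpa [pow_two, mul_assoc] using hS
  have hS1 : Yi * (Yj * Yj) = (s ^ 2 + (s ^ 2)⁻¹) • (Yj * (Yi * Yj)) - Yj * (Yj * Yi) := by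
    rw [eq_sub_iff_add_eq, add_comm]; exact hS'
  have hS2 : ∀ x : R, Yi * (Yj * (Yj * x)) =
      (s ^ 2 + (s ^ 2)⁻¹) • (Yj * (Yi * (Yj * x))) - Yj * (Yj * (Yi * x)) := by
    intro x
    have h := congrArg (· * x) hS1
    simpa [mul_assoc, sub_mul, smul_mul_assoc] using h
  set c : K := (s ^ 2 - (s ^ 2)⁻¹)⁻¹ with hc
  set Zb : R := s • (Yj * Yi) - s⁻¹ • (Yi * Yj) with hZb
  have hE : Zb ^ 2 * W - (s ^ 2 + (s ^ 2)⁻¹) • (Zb * W * Zb) + W * Zb ^ 2 = 0 := by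
    simp only [hZb, pow_two, mul_sub, sub_mul, mul_add, add_mul, smul_mul_assoc, mul_smul_comm,
      smul_add, smul_sub, smul_smul, mul_assoc, hB1, hB2, hB1', hB2', hS1, hS2, mul_one, one_mul]
    match_scalars
    any_goals (field_simp; try ring)
    all_goals (simp only [inv_pow]; field_simp; try ring)
  have h2 : (c • Zb) ^ 2 * W - (s ^ 2 + (s ^ 2)⁻¹) • ((c • Zb) * W * (c • Zb))
      + W * (c • Zb) ^ 2
      = (c * c) • (Zb ^ 2 * W - (s ^ 2 + (s ^ 2)⁻¹) • (Zb * W * Zb) + W * Zb ^ 2) := by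
    simp only [pow_two, smul_mul_assoc, mul_smul_comm, smul_smul, smul_sub, smul_add]
    match_scalars <;> ring
  rw [h2, hE, smul_zero]

/-- for `a i j = -1`,
`z(i;j,m)² y(i,m+1) − (t+t⁻¹) z(i;j,m) y(i,m+1) z(i;j,m) + y(i,m+1) z(i;j,m)² = 0`. -/
theorem statement10 {I : Type} [Fintype I] [DecidableEq I] (a : I → I → ℤ)
    (hA : IsCartanADE a) (i j : I) (hij : a i j = -1) (m : ℤ) :
    z a i j m ^ 2 * y a i (m + 1)
      - (tq + tq⁻¹) • (z a i j m * y a i (m + 1) * z a i j m)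
      + y a i (m + 1) * z a i j m ^ 2 = 0 := by
  have hsymm : a j i = -1 := by rw [← hA.2.1 i j]; exact hij
  have hne : j ≠ i := by
    intro h; rw [h] at hsymm; rw [hA.1 i] at hsymm; exact absurd hsymm (by norm_num)
  have hS := RingQuot.mkAlgHom_rel F (KtRel.serre (a := a) (i := j) (j := i) (m := m) hsymm)
  simp only [map_add, map_mul, map_pow, map_smul] at hS
  have hB1 := RingQuot.mkAlgHom_rel F (KtRel.boson (a := a) i i m)
  rw [hA.1 i] at hB1
  simp only [eq_self_iff_true, if_true, map_add, map_mul, map_smul, map_one,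
    show ((2:ℤ)) = ((2:ℕ):ℤ) from rfl, zpow_natCast] at hB1
  have hB2 := RingQuot.mkAlgHom_rel F (KtRel.boson (a := a) j i m)
  rw [hsymm] at hB2
  simp only [if_neg hne, map_add, map_mul, map_smul, map_zero, add_zero, zpow_neg_one] at hB2
  have hkey := key_serre_aux (K := F) (R := Kt a) tHalf RatFunc.X_ne_zero
    (y a i m) (y a j m) (y a i (m + 1)) hS hB1 hB2
  exact hkey
end
end
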